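/- arXiv:2306.12575 — 2 statements merged into one kernel-verified Lean document; each statement's English description precedes it below -/
import Mathlib

section
/- Let $T$ be a caterpillar with spine of $p > 2$ vertices (spine = vertices of degree $\geq 2$, both spine endpoints have off-spine leaf neighbours), where $R > 2$ spine vertices have off-spine neighbours, with $r_i \geq 1$ off-spine neighbours each, and $n = |V(T)|$. In the single-defence firefighter game, the total burnt count over all $n$ starting vertices is at least $2n - 2p + R + (R-2)\min_i r_i + (p-R)\min_i r_i + (p - 2) \geq 2n + R - 4$, so the expected damage is at least $2 + (R-4)/n > 2 - 2/n$. -/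
open SimpleGraph Finset
open scoped Classical

namespace FF

variable {V : Type*} [Fintype V] [DecidableEq V]

/-- One step of fire spread: the fire spreads to every undefended neighbour of a burnt vertex. -/
noncomputable def spread (G : SimpleGraph V) (D B : Finset V) : Finset V :=
  B ∪ Finset.univ.filter (fun v => v ∉ D ∧ ∃ u ∈ B, G.Adj u v)

/-- Cumulative defended set of a classic strategy. -/
noncomputable def cumDef (σ : ℕ → Finset V) (t : ℕ) : Finset V :=
  (Finset.range (t + 1)).biUnion σ

/-- Burnt set at time `t` in the classic game. -/
noncomputable def burnt (G : SimpleGraph V) (F : Finset V) (σ : ℕ → Finset V) : ℕ → Finset V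
  | 0 => F
  | t + 1 => spread G (cumDef σ t) (burnt G F σ t)

/-- A classic strategy is valid for `b` firefighters. -/
def ValidClassic (G : SimpleGraph V) (F : Finset V) (b : ℕ) (σ : ℕ → Finset V) : Prop :=
  ∀ t, (σ t).card ≤ b ∧ ∀ v ∈ σ t, v ∉ burnt G F σ t

/-- Final burnt set (the process stabilizes after `|V|` steps). -/
noncomputable def finalBurnt (G : SimpleGraph V) (F : Finset V) (σ : ℕ → Finset V) : Finset V :=
  burnt G F σ (Fintype.card V)

/-- Maximum number of vertices saved in the classic game. -/
noncomputable def MVS (G : SimpleGraph V) (F : Finset V) (b : ℕ) : ℕ :=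
  sSup {k | ∃ σ : ℕ → Finset V, ValidClassic G F b σ ∧
    k = Fintype.card V - (finalBurnt G F σ).card}

/-- Defended set induced by firefighter positions up to time `t`. -/
noncomputable def posDef {b : ℕ} (p : ℕ → Fin b → V) (t : ℕ) : Finset V :=
  (Finset.range (t + 1)).biUnion (fun τ => Finset.univ.image (p τ))

/-- Burnt set at time `t` in the position-based games. -/
noncomputable def pburnt (G : SimpleGraph V) (F : Finset V) {b : ℕ}
    (p : ℕ → Fin b → V) : ℕ → Finset V
  | 0 => F
  | t + 1 => spread G (posDef p t) (pburnt G F p t)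

/-- Validity for the distance-restricted game: firefighters never occupy a burnt
vertex and move graph distance at most `d` each turn. -/
def ValidDR (G : SimpleGraph V) (F : Finset V) (d : ℕ) {b : ℕ} (p : ℕ → Fin b → V) : Prop :=
  (∀ t i, p t i ∉ pburnt G F p t) ∧ ∀ t i, G.dist (p t i) (p (t + 1) i) ≤ d

/-- Distance-restricted maximum vertices saved. -/
noncomputable def DRMVS (G : SimpleGraph V) (F : Finset V) (b d : ℕ) : ℕ :=
  sSup {k | ∃ p : ℕ → Fin b → V, ValidDR G F d p ∧
    k = Fintype.card V - (pburnt G F p (Fintype.card V)).card}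

/-- Validity for the path-restricted game with unlimited distance: firefighters
move along walks of unburnt vertices. -/
def ValidPR (G : SimpleGraph V) (F : Finset V) {b : ℕ} (p : ℕ → Fin b → V) : Prop :=
  (∀ t i, p t i ∉ pburnt G F p t) ∧
    ∀ t i, ∃ w : G.Walk (p t i) (p (t + 1) i),
      ∀ v ∈ w.support, v ∉ pburnt G F p (t + 1)

/-- Path-restricted (unlimited distance) maximum vertices saved. -/
noncomputable def PRMVS (G : SimpleGraph V) (F : Finset V) (b : ℕ) : ℕ :=
  sSup {k | ∃ p : ℕ → Fin b → V, ValidPR G F p ∧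
    k = Fintype.card V - (pburnt G F p (Fintype.card V)).card}

/-- Validity for the distance- and path-restricted game. -/
def ValidDPR (G : SimpleGraph V) (F : Finset V) (d : ℕ) {b : ℕ} (p : ℕ → Fin b → V) : Prop :=
  (∀ t i, p t i ∉ pburnt G F p t) ∧
    ∀ t i, ∃ w : G.Walk (p t i) (p (t + 1) i), w.length ≤ d ∧
      ∀ v ∈ w.support, v ∉ pburnt G F p (t + 1)

/-- Distance- and path-restricted maximum vertices saved. -/
noncomputable def DPRMVS (G : SimpleGraph V) (F : Finset V) (b d : ℕ) : ℕ :=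
  sSup {k | ∃ p : ℕ → Fin b → V, ValidDPR G F d p ∧
    k = Fintype.card V - (pburnt G F p (Fintype.card V)).card}

/-- Burnt count in the single-defence game: the firefighter defends a single
vertex `w ≠ s` and the fire then burns everything reachable from `s` avoiding `w`. -/
noncomputable def sdBurnt (G : SimpleGraph V) (s : V) : ℕ :=
  sInf {k | ∃ w, w ≠ s ∧
    k = (Finset.univ.filter (fun x => ∃ q : G.Walk s x, w ∉ q.support)).card}

end FF

open FF

/-- One-directional edge description of a general caterpillar: the spine is the
path on `Fin p` and spine vertex `i` carries `r i` off-spine leaves. -/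
def catLink3 (p : ℕ) (r : Fin p → ℕ) :
    (Fin p ⊕ Σ i : Fin p, Fin (r i)) → (Fin p ⊕ Σ i : Fin p, Fin (r i)) → Prop
  | Sum.inl a, Sum.inl b => (b : ℕ) = (a : ℕ) + 1
  | Sum.inl a, Sum.inr x => a = x.1
  | _, _ => False

/-- The caterpillar with spine path `Fin p` and `r i` leaves on spine vertex `i`. -/
def catG3 (p : ℕ) (r : Fin p → ℕ) : SimpleGraph (Fin p ⊕ Σ i : Fin p, Fin (r i)) where
  Adj x y := catLink3 p r x y ∨ catLink3 p r y x
  symm := ⟨fun x y h => h.symm⟩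
  loopless := by
    exact ⟨by rintro (a | x) h <;> rcases h with h | h <;> simp only [catLink3] at h <;> omega⟩

/-!
Bound each `sdBurnt` from below by exhibiting, for every defended vertex `w`, vertices still
reachable from the source. A leaf source burns itself. A spine source `i` burns itself, its `r i`
leaves and a spine neighbour, one of which may be `w`. If `i` is interior and a spine vertex `k`
is defended, the fire still reaches the spine endpoint on the far side from `k` together with its
at least `m` leaves; if a leaf is defended, every other vertex burns. Summing,
`total ≥ p + 2 ∑ r + (p - 2)(1 + m)`, which dominates the stated bounds because `R ≤ p`, `m ≥ 1`.
-/

namespace FF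

variable {V : Type*} [Fintype V]

noncomputable def reachAvoiding (G : SimpleGraph V) (s w : V) : Finset V :=
  univ.filter (fun x => ∃ q : G.Walk s x, w ∉ q.support)

variable {G : SimpleGraph V} {s w x y : V}

theorem self_mem_reachAvoiding (h : w ≠ s) : s ∈ reachAvoiding G s w :=
  mem_filter.mpr ⟨mem_univ _, Walk.nil, by simpa using h⟩

theorem mem_reachAvoiding_of_adj (hx : x ∈ reachAvoiding G s w) (hxy : G.Adj x y) (hy : w ≠ y) :
    y ∈ reachAvoiding G s w := by
  obtain ⟨q, hq⟩ := (mem_filter.mp hx).2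
  refine mem_filter.mpr ⟨mem_univ _, q.concat hxy, ?_⟩
  rw [Walk.support_concat, List.mem_append, List.mem_singleton]
  exact fun h => h.elim hq hy

theorem le_sdBurnt {k : ℕ} (hne : ∃ w, w ≠ s)
    (h : ∀ w, w ≠ s → k ≤ #(reachAvoiding G s w)) : k ≤ sdBurnt G s := by
  obtain ⟨w₀, hw₀⟩ := hne
  exact le_csInf ⟨_, w₀, hw₀, rfl⟩ fun _ ⟨w, hw, hk⟩ => hk ▸ h w hw

theorem one_le_sdBurnt (hne : ∃ w, w ≠ s) : 1 ≤ sdBurnt G s :=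
  le_sdBurnt hne fun _ hw => card_pos.mpr ⟨s, self_mem_reachAvoiding hw⟩

end FF

namespace Caterpillar

variable {p : ℕ} {r : Fin p → ℕ} {s w : Fin p ⊕ Σ i : Fin p, Fin (r i)}

local notation "A" => reachAvoiding (catG3 p r) s w

theorem inl_mem_of_le {i j : Fin p} (hi : Sum.inl i ∈ A) (hij : i ≤ j)
    (hw : ∀ c : Fin p, i ≤ c → c ≤ j → w ≠ Sum.inl c) : Sum.inl j ∈ A := by
  obtain ⟨d, hd⟩ : ∃ d, (j : ℕ) = i + d := ⟨j - i, by omega⟩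
  induction d generalizing j with
  | zero => rwa [show j = i from Fin.ext hd]
  | succ d ih =>
    let j' : Fin p := ⟨j - 1, by omega⟩
    have hj' : Sum.inl j' ∈ A :=
      ih (by rw [Fin.le_iff_val_le_val]; simp [j']; omega)
        (fun c hic hcj =>
          hw c hic (by rw [Fin.le_iff_val_le_val] at hcj ⊢; simp [j'] at hcj; omega))
        (show (j : ℕ) - 1 = i + d by omega)
    exact mem_reachAvoiding_of_adj hj' (Or.inl (show (j : ℕ) = j - 1 + 1 by omega))
      (hw j hij le_rfl)

theorem inl_mem_of_ge {i j : Fin p} (hi : Sum.inl i ∈ A) (hji : j ≤ i)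
    (hw : ∀ c : Fin p, j ≤ c → c ≤ i → w ≠ Sum.inl c) : Sum.inl j ∈ A := by
  obtain ⟨d, hd⟩ : ∃ d, (i : ℕ) = j + d := ⟨i - j, by omega⟩
  induction d generalizing j with
  | zero => rwa [show j = i from Fin.ext hd.symm]
  | succ d ih =>
    let j' : Fin p := ⟨j + 1, by omega⟩
    have hj' : Sum.inl j' ∈ A :=
      ih (by rw [Fin.le_iff_val_le_val]; simp [j']; omega)
        (fun c hjc hci =>
          hw c (by rw [Fin.le_iff_val_le_val] at hjc ⊢; simp [j'] at hjc; omega) hci)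
        (show (i : ℕ) = j + 1 + d by omega)
    exact mem_reachAvoiding_of_adj hj' (Or.inr rfl) (hw j le_rfl hji)

/-- The spine vertices `U` together with the leaves hanging from `T`. -/
def block (U T : Finset (Fin p)) : Finset (Fin p ⊕ Σ i : Fin p, Fin (r i)) :=
  U.disjSum (T.sigma fun _ => univ)

theorem card_block (U T : Finset (Fin p)) : #(block (r := r) U T) = #U + ∑ i ∈ T, r i := by
  simp [block, card_disjSum, card_sigma]

theorem block_sdiff_subset {U T : Finset (Fin p)}
    (hU : ∀ c ∈ U, w ≠ Sum.inl c → Sum.inl c ∈ A) (hT : ∀ c ∈ T, Sum.inl c ∈ A) :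
    block U T \ {w} ⊆ A := by
  intro x hx
  obtain ⟨hx, hxw⟩ := mem_sdiff.mp hx
  rcases x with c | ⟨c, j⟩
  · exact hU c (inl_mem_disjSum.mp hx) (Ne.symm (by simpa using hxw))
  · have hc : c ∈ T := (mem_sigma.mp (inr_mem_disjSum.mp hx)).1
    exact mem_reachAvoiding_of_adj (hT c hc) (Or.inl rfl) (Ne.symm (by simpa using hxw))

theorem inl_mem_of_forall_ne {i j : Fin p} (hi : Sum.inl i ∈ A)
    (hw : ∀ c : Fin p, min i j ≤ c → c ≤ max i j → w ≠ Sum.inl c) : Sum.inl j ∈ A := by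
  rcases le_total i j with hij | hji
  · exact inl_mem_of_le hi hij fun c h₁ h₂ =>
      hw c (by simpa [hij] using h₁) (by simpa [hij] using h₂)
  · exact inl_mem_of_ge hi hji fun c h₁ h₂ =>
      hw c (by simpa [hji] using h₁) (by simpa [hji] using h₂)

theorem exists_adj_inl (hp : 2 ≤ p) (i : Fin p) :
    ∃ i', (catG3 p r).Adj (Sum.inl i) (Sum.inl i') := by
  by_cases h : (i : ℕ) + 1 < p
  · exact ⟨⟨i + 1, h⟩, Or.inl rfl⟩
  · exact ⟨⟨i - 1, by omega⟩, Or.inr (show (i : ℕ) = i - 1 + 1 by omega)⟩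

theorem one_add_le_sdBurnt_inl (hp : 2 ≤ p) (i : Fin p) :
    1 + r i ≤ sdBurnt (catG3 p r) (Sum.inl i) := by
  obtain ⟨i', hii'⟩ := exists_adj_inl (r := r) hp i
  refine le_sdBurnt ⟨_, hii'.ne.symm⟩ fun w hw => ?_
  have hi : Sum.inl i ∈ reachAvoiding (catG3 p r) (Sum.inl i) w := self_mem_reachAvoiding hw
  have hsub : block {i, i'} {i} \ {w} ⊆ reachAvoiding (catG3 p r) (Sum.inl i) w := by
    refine block_sdiff_subset (fun c hc hwc => ?_) (by simpa using hi)
    rcases mem_insert.mp hc with rfl | hc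
    · exact hi
    · exact mem_reachAvoiding_of_adj hi (mem_singleton.mp hc ▸ hii') hwc
  have hcard : #(block (r := r) {i, i'} {i}) = 2 + r i := by
    rw [card_block, card_pair (by simpa using hii'.ne), sum_singleton]
  have := le_card_sdiff {w} (block (r := r) {i, i'} {i})
  have := card_le_card hsub
  simp only [card_singleton] at *
  omega

theorem card_sub_one_le_card_reachAvoiding_inr (i : Fin p) (x : Σ i : Fin p, Fin (r i)) :
    p + ∑ j, r j - 1 ≤ #(reachAvoiding (catG3 p r) (Sum.inl i) (Sum.inr x)) := by
  have hi := self_mem_reachAvoiding (G := catG3 p r) (w := Sum.inr x) (s := Sum.inl i) (by simp)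
  have hall : ∀ c, Sum.inl c ∈ reachAvoiding (catG3 p r) (Sum.inl i) (Sum.inr x) :=
    fun c => inl_mem_of_forall_ne hi fun _ _ _ => by simp
  have hsub := block_sdiff_subset (U := univ) (T := univ) (fun c _ _ => hall c) (fun c _ => hall c)
  have := le_card_sdiff {Sum.inr x} (block (r := r) univ univ)
  have := card_le_card hsub
  rw [card_block, card_univ, Fintype.card_fin, card_singleton] at *
  omega

variable {m : ℕ}

theorem two_add_add_le_card_reachAvoiding_inl {i k : Fin p} (hi0 : 0 < (i : ℕ))
    (hip : (i : ℕ) + 1 < p) (h0 : 1 ≤ r ⟨0, by omega⟩) (hlast : 1 ≤ r ⟨p - 1, by omega⟩)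
    (hm : ∀ e, 1 ≤ r e → m ≤ r e) (hk : k ≠ i) :
    2 + r i + m ≤ #(reachAvoiding (catG3 p r) (Sum.inl i) (Sum.inl k)) := by
  obtain ⟨e, hre, hei, hfree⟩ : ∃ e : Fin p, 1 ≤ r e ∧ e ≠ i ∧
      ∀ c, min i e ≤ c → c ≤ max i e → Sum.inl (β := Σ i : Fin p, Fin (r i)) k ≠ Sum.inl c := by
    have hk' : (k : ℕ) ≠ i := Fin.val_ne_of_ne hk
    -- go to the end of the spine on the side of `i` away from `k`
    by_cases hki : (k : ℕ) < i
    · refine ⟨_, hlast, Fin.ne_of_val_ne (by simp; omega), fun c hc _ => ?_⟩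
      simp only [Fin.le_iff_val_le_val, Fin.coe_min] at hc
      simp [Fin.ext_iff]; omega
    · refine ⟨_, h0, Fin.ne_of_val_ne (by simp; omega), fun c _ hc => ?_⟩
      simp only [Fin.le_iff_val_le_val, Fin.coe_max] at hc
      simp [Fin.ext_iff]; omega
  have hi := self_mem_reachAvoiding (G := catG3 p r) (s := Sum.inl i) (w := Sum.inl k)
    (by simpa using hk)
  have hU : ∀ c ∈ ({i, e} : Finset (Fin p)),
      Sum.inl c ∈ reachAvoiding (catG3 p r) (Sum.inl i) (Sum.inl k) := by
    simpa using ⟨hi, inl_mem_of_forall_ne hi hfree⟩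
  have hsub := block_sdiff_subset (fun c hc _ => hU c hc) hU
  have hkU : k ∉ ({i, e} : Finset (Fin p)) := by
    simpa [hk] using fun h => hfree e (by simp) (by simp) (congrArg _ h)
  rw [sdiff_singleton_eq_erase, erase_eq_of_notMem (by simpa [block] using hkU)] at hsub
  have := card_le_card hsub
  rw [card_block, card_pair hei.symm, sum_pair hei.symm] at this
  have := hm e hre
  omega

theorem two_add_add_le_sdBurnt_inl {i : Fin p} (hi0 : 0 < (i : ℕ)) (hip : (i : ℕ) + 1 < p)
    (h0 : 1 ≤ r ⟨0, by omega⟩) (hlast : 1 ≤ r ⟨p - 1, by omega⟩)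
    (hm : ∀ e, 1 ≤ r e → m ≤ r e) :
    2 + r i + m ≤ sdBurnt (catG3 p r) (Sum.inl i) := by
  refine le_sdBurnt ⟨Sum.inl ⟨0, by omega⟩, by simp [Fin.ext_iff]; omega⟩ fun w hw => ?_
  rcases w with k | x
  · exact two_add_add_le_card_reachAvoiding_inl hi0 hip h0 hlast hm (by simpa using hw)
  · have hsum : r i + r ⟨0, by omega⟩ ≤ ∑ j, r j := by
      rw [← sum_pair (f := r) (Fin.ne_of_val_ne (by simp; omega))]
      exact sum_le_sum_of_subset (subset_univ _)
    have := card_sub_one_le_card_reachAvoiding_inr i x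
    have := hm _ h0
    omega

theorem le_sum_sdBurnt (hp : 2 < p) (h0 : 1 ≤ r ⟨0, Nat.zero_lt_of_lt hp⟩)
    (hlast : 1 ≤ r ⟨p - 1, Nat.sub_one_lt_of_lt hp⟩) (hm : ∀ e, 1 ≤ r e → m ≤ r e) :
    p + 2 * ∑ i, r i + (p - 2) * (1 + m) ≤
      ∑ v : Fin p ⊕ Σ i : Fin p, Fin (r i), sdBurnt (catG3 p r) v := by
  let interior : Finset (Fin p) := Ioo ⟨0, by omega⟩ ⟨p - 1, by omega⟩
  have hleaves : ∑ i, r i ≤ ∑ x : Σ i : Fin p, Fin (r i), sdBurnt (catG3 p r) (Sum.inr x) := by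
    calc ∑ i, r i = ∑ _x : Σ i : Fin p, Fin (r i), 1 := by simp
      _ ≤ _ := sum_le_sum fun x _ => one_le_sdBurnt ⟨Sum.inl x.1, by simp⟩
  have hspine : ∀ i : Fin p, 1 + r i + (if i ∈ interior then 1 + m else 0) ≤
      sdBurnt (catG3 p r) (Sum.inl i) := by
    intro i
    split_ifs with hi
    · obtain ⟨hi0, hip⟩ := mem_Ioo.mp hi
      rw [Fin.lt_def] at hi0 hip
      have := two_add_add_le_sdBurnt_inl (i := i) (by simpa using hi0) (by simp at hip; omega)
        h0 hlast hm
      omega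
    · simpa using one_add_le_sdBurnt_inl (r := r) hp.le i
  have hspine_sum : ∑ i : Fin p, (1 + r i + (if i ∈ interior then 1 + m else 0)) =
      p + ∑ i, r i + (p - 2) * (1 + m) := by
    rw [sum_add_distrib, sum_add_distrib, sum_ite_mem, univ_inter, sum_const, sum_const,
      Fin.card_Ioo, card_univ, Fintype.card_fin]
    simp only [smul_eq_mul, mul_one]
    rw [show p - 1 - 0 - 1 = p - 2 by omega]
  rw [Fintype.sum_sum_type]
  have := sum_le_sum fun i (_ : i ∈ univ) => hspine i
  omega

end Caterpillar

theorem stmt9 (p : ℕ) (hp : 2 < p) (r : Fin p → ℕ)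
    (h0 : 1 ≤ r ⟨0, by omega⟩) (hlast : 1 ≤ r ⟨p - 1, by omega⟩)
    (R m n total : ℕ)
    (hR : R = (Finset.univ.filter fun i => 1 ≤ r i).card)
    (hR2 : 2 < R)
    (hm : m = sInf {k | ∃ i, 1 ≤ r i ∧ k = r i})
    (hn : n = p + ∑ i, r i)
    (htotal : total =
      ∑ v : Fin p ⊕ Σ i : Fin p, Fin (r i), FF.sdBurnt (catG3 p r) v) :
    (2 * (n : ℤ) - 2 * p + R + ((R : ℤ) - 2) * m + ((p : ℤ) - R) * m + ((p : ℤ) - 2)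
        ≤ (total : ℤ)) ∧
    (2 * (n : ℤ) + R - 4 ≤
      2 * (n : ℤ) - 2 * p + R + ((R : ℤ) - 2) * m + ((p : ℤ) - R) * m + ((p : ℤ) - 2)) ∧
    (2 + ((R : ℚ) - 4) / (n : ℚ) ≤ (total : ℚ) / (n : ℚ)) ∧
    (2 - 2 / (n : ℚ) < 2 + ((R : ℚ) - 4) / (n : ℚ)) := by
  have hm_le : ∀ e, 1 ≤ r e → m ≤ r e := fun e he => hm ▸ Nat.sInf_le ⟨e, he, rfl⟩
  have hm1 : 1 ≤ m := by
    have hne : {k | ∃ i, 1 ≤ r i ∧ k = r i}.Nonempty := ⟨_, _, h0, rfl⟩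
    obtain ⟨e, he, hme⟩ := hm ▸ Nat.sInf_mem hne
    exact hme ▸ he
  have hRp : R ≤ p := hR ▸ (card_filter_le _ _).trans (by simp)
  have key : ((p + 2 * ∑ i, r i + (p - 2) * (1 + m) : ℕ) : ℤ) ≤ total := by
    exact_mod_cast htotal ▸ Caterpillar.le_sum_sdBurnt hp h0 hlast hm_le
  push_cast [Nat.cast_sub hp.le] at key
  have hnZ : (n : ℤ) = p + ∑ i, (r i : ℤ) := by rw [hn]; push_cast; ring
  have h1 : 2 * (n : ℤ) - 2 * p + R + ((R : ℤ) - 2) * m + ((p : ℤ) - R) * m + ((p : ℤ) - 2)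
      ≤ total := by
    rw [hnZ]; linarith [(Nat.cast_le (α := ℤ)).mpr hRp]
  have h2 : 2 * (n : ℤ) + R - 4 ≤
      2 * (n : ℤ) - 2 * p + R + ((R : ℤ) - 2) * m + ((p : ℤ) - R) * m + ((p : ℤ) - 2) := by
    nlinarith [(Nat.cast_le (α := ℤ)).mpr hm1, (Nat.cast_lt (α := ℤ)).mpr hp]
  have hn0 : (0 : ℚ) < n := by exact_mod_cast (show 0 < n by omega)
  refine ⟨h1, h2, ?_, ?_⟩
  · rw [show (2 : ℚ) + (R - 4) / n = (2 * n + R - 4) / n by field_simp; ring]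
    gcongr
    exact_mod_cast h2.trans h1
  · have hR4 : (-2 : ℚ) < R - 4 := by linarith [show (3 : ℚ) ≤ R by exact_mod_cast hR2]
    linarith [div_lt_div_of_pos_right hR4 hn0, neg_div (n : ℚ) 2]
end

section
/- For every $b \geq 1$ there exists a connected graph $G$ and a connected spanning subgraph $H \subseteq G$ such that the path-restricted expected damage satisfies $E_{pr}(G; b, b, \infty) < E_{pr}(H; b, b, \infty)$; moreover the ratio $E_{pr}(H;b,b,\infty)/E_{pr}(G;b,b,\infty)$ can be made arbitrarily large. In particular, expected damage in the path-restricted game is not monotone under edge deletion. -/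
open SimpleGraph Finset
open scoped Classical

namespace FF

/-- Path-restricted expected damage `E_pr(G; q, b, ∞)`: the average number of
burnt vertices over all `q`-subsets of initially burning vertices, under
optimal play by `b` path-restricted firefighters. -/
noncomputable def Epr {V : Type*} [Fintype V] [DecidableEq V]
    (G : SimpleGraph V) (q b : ℕ) : ℚ :=
  (∑ F ∈ (Finset.univ : Finset V).powersetCard q,
      ((Fintype.card V : ℚ) - FF.PRMVS G F b)) / ((Fintype.card V).choose q)

end FF

/-!
H is the path and G the cycle on the same `n` vertices.

On the cycle, `b` burning vertices cut the rest into at most `b` arcs. One firefighter per arc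
stands on its first vertex, which stops the fire entering the arc from behind, and then walks
along the arc to its next-to-last vertex, which stops the fire coming from the front after it
has burnt the last vertex. So at most `2b` vertices burn and `E_pr(G) ≤ 2b`.

On the path, a firefighter can never cross a burning vertex, so it stays in one of the `b + 1`
segments cut out by the fires; some segment is never defended and burns completely. Shifting
the `i`-th smallest point of a `b`-subset of `Fin n'` up by `(m + 1)(i + 1)` gives `choose n' b`
distinct `b`-subsets of `Fin n`, `n = n' + (b + 1)(m + 1)`, all of whose segments have at least
`m` vertices. For `n' ≈ n / 2` these are at least a `2⁻ᵇ` fraction of all `b`-subsets, so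
`E_pr(H) ≥ 2⁻ᵇ m`, which is as large as we like.
-/

lemma Finset.exists_image_univ_eq {α : Type*} [DecidableEq α] {s : Finset α} {b : ℕ}
    (hs : s.Nonempty) (hb : #s ≤ b) : ∃ e : Fin b → α, univ.image e = s := by
  obtain ⟨a, ha⟩ := hs
  refine ⟨fun i => if h : i.val < #s then s.equivFin.symm ⟨i, h⟩ else a, ?_⟩
  ext x
  simp only [mem_image, mem_univ, true_and]
  constructor
  · rintro ⟨i, rfl⟩
    split_ifs
    exacts [(s.equivFin.symm _).2, ha]
  · intro hx
    refine ⟨⟨s.equivFin ⟨x, hx⟩, (s.equivFin ⟨x, hx⟩).2.trans_le hb⟩, ?_⟩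
    simp

lemma Nat.choose_le_two_pow_mul_choose {n n' b : ℕ} (h : n + 2 * b ≤ 2 * n' + 2) :
    n.choose b ≤ 2 ^ b * n'.choose b := by
  refine Nat.le_of_mul_le_mul_left ?_ b.factorial_pos
  calc b.factorial * n.choose b = n.descFactorial b :=
        (Nat.descFactorial_eq_factorial_mul_choose _ _).symm
    _ ≤ n ^ b := Nat.descFactorial_le_pow _ _
    _ ≤ (2 * (n' + 1 - b)) ^ b := Nat.pow_le_pow_left (by omega) _
    _ = 2 ^ b * (n' + 1 - b) ^ b := mul_pow _ _ _
    _ ≤ 2 ^ b * n'.descFactorial b := Nat.mul_le_mul_left _ (Nat.pow_sub_le_descFactorial _ _)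
    _ = b.factorial * (2 ^ b * n'.choose b) := by
      rw [Nat.descFactorial_eq_factorial_mul_choose]; ring

namespace FF

section Game

variable {V : Type*} [DecidableEq V] {G : SimpleGraph V} {F : Finset V} {b : ℕ}
  {p : ℕ → Fin b → V}

lemma mem_posDef {t : ℕ} {v : V} : v ∈ posDef p t ↔ ∃ τ ≤ t, ∃ i, p τ i = v := by
  simp [posDef]

lemma image_subset_posDef {τ t : ℕ} (h : τ ≤ t) : univ.image (p τ) ⊆ posDef p t := by
  intro v hv
  obtain ⟨i, -, rfl⟩ := mem_image.mp hv
  exact mem_posDef.mpr ⟨τ, h, i, rfl⟩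

variable [Fintype V]

@[simp]
lemma mem_spread {D B : Finset V} {v : V} :
    v ∈ spread G D B ↔ v ∈ B ∨ v ∉ D ∧ ∃ u ∈ B, G.Adj u v := by
  simp [spread]

lemma spread_mono {D D' B B' : Finset V} (hD : D' ⊆ D) (hB : B ⊆ B') :
    spread G D B ⊆ spread G D' B' := by
  intro v
  simp only [mem_spread]
  rintro (hv | ⟨hvD, u, hu, huv⟩)
  · exact Or.inl (hB hv)
  · exact Or.inr ⟨fun h => hvD (hD h), u, hB hu, huv⟩

lemma pburnt_mono : Monotone (pburnt G F p) :=
  monotone_nat_of_le_succ fun _ => subset_union_left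

lemma subset_pburnt (t : ℕ) : F ⊆ pburnt G F p t :=
  pburnt_mono (Nat.zero_le t)

lemma mem_pburnt_succ {t : ℕ} {u v : V} (hu : u ∈ pburnt G F p t) (huv : G.Adj u v)
    (hv : v ∉ posDef p t) : v ∈ pburnt G F p (t + 1) :=
  mem_spread.mpr (Or.inr ⟨hv, u, hu, huv⟩)

lemma pburnt_subset {B : Finset V} (hF : F ⊆ B) (h₀ : spread G (posDef p 0) F ⊆ B)
    (h : ∀ t, spread G (posDef p (t + 1)) B ⊆ B) : ∀ t, pburnt G F p t ⊆ B
  | 0 => hF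
  | 1 => h₀
  | t + 2 => (spread_mono subset_rfl (pburnt_subset hF h₀ h (t + 1))).trans (h t)

lemma mem_pburnt_of_walk {u v : V} (w : G.Walk u v) {s : ℕ} (hu : u ∈ pburnt G F p s)
    (hw : ∀ z ∈ w.support, z ∉ F → ∀ t, z ∉ posDef p t) :
    v ∈ pburnt G F p (s + w.length) := by
  induction w generalizing s with
  | nil => exact hu
  | @cons u x v hux w ih =>
    have hx : x ∈ pburnt G F p (s + 1) := by
      by_cases hxF : x ∈ F
      · exact subset_pburnt _ hxF
      · exact mem_pburnt_succ hu hux (hw x (by simp) hxF s)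
    rw [Walk.length_cons, add_comm w.length, ← add_assoc]
    exact ih hx fun z hz => hw z (by simp [hz])

lemma PRMVS_le_card (F : Finset V) (b : ℕ) : PRMVS G F b ≤ Fintype.card V :=
  csSup_le' (by rintro k ⟨p, -, rfl⟩; exact Nat.sub_le _ _)

lemma card_le_PRMVS_add (hp : ValidPR G F p) :
    Fintype.card V ≤ PRMVS G F b + #(pburnt G F p (Fintype.card V)) := by
  have : Fintype.card V - #(pburnt G F p (Fintype.card V)) ≤ PRMVS G F b :=
    le_csSup ⟨Fintype.card V, by rintro k ⟨q, -, rfl⟩; exact Nat.sub_le _ _⟩ ⟨p, hp, rfl⟩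
  omega

lemma PRMVS_add_le {m : ℕ} (hm : m ≤ Fintype.card V)
    (h : ∀ p : ℕ → Fin b → V, ValidPR G F p → m ≤ #(pburnt G F p (Fintype.card V))) :
    PRMVS G F b + m ≤ Fintype.card V := by
  have : PRMVS G F b ≤ Fintype.card V - m :=
    csSup_le' (by rintro k ⟨p, hp, rfl⟩; exact Nat.sub_le_sub_left (h p hp) _)
  omega

end Game

section Components

variable {V : Type*} {G : SimpleGraph V} {F : Finset V} {ι : Type*} {κ : V → ι}

lemma label_eq_of_walk (hκ : ∀ ⦃u v⦄, G.Adj u v → u ∉ F → v ∉ F → κ u = κ v) {u v : V}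
    (w : G.Walk u v) (hw : ∀ z ∈ w.support, z ∉ F) : κ u = κ v := by
  induction w with
  | nil => rfl
  | cons h w ih =>
    simp only [Walk.support_cons, List.mem_cons, forall_eq_or_imp] at hw
    exact (hκ h hw.1 (hw.2 _ w.start_mem_support)).trans (ih hw.2)

lemma _root_.SimpleGraph.Connected.exists_walk_from (hG : G.Connected)
    (hκ : ∀ ⦃u v⦄, G.Adj u v → u ∉ F → v ∉ F → κ u = κ v) (hF : F.Nonempty) (v : V) :
    ∃ f ∈ F, ∃ w : G.Walk f v, ∀ z ∈ w.support, z ∉ F → κ z = κ v := by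
  suffices ∀ {v u : V} (w : G.Walk v u), u ∈ F →
      ∃ f ∈ F, ∃ w : G.Walk f v, ∀ z ∈ w.support, z ∉ F → κ z = κ v by
    obtain ⟨f, hf⟩ := hF
    exact this (hG v f).some hf
  intro v u w hu
  induction w with
  | nil => exact ⟨_, hu, Walk.nil, fun z hz hzF => by simp_all⟩
  | @cons v x u hvx w ih =>
    by_cases hv : v ∈ F
    · exact ⟨v, hv, Walk.nil, fun z hz hzF => by simp_all⟩
    by_cases hx : x ∈ F
    · exact ⟨x, hx, Walk.cons hvx.symm Walk.nil, fun z hz hzF => by aesop⟩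
    obtain ⟨f, hf, w', hw'⟩ := ih hu
    refine ⟨f, hf, w'.concat hvx.symm, fun z hz hzF => ?_⟩
    rw [Walk.support_concat, List.mem_append, List.mem_singleton] at hz
    rcases hz with hz | rfl
    · exact (hw' z hz hzF).trans (hκ hvx.symm hx hv)
    · rfl

variable [Fintype V] [DecidableEq V] {b : ℕ} {p : ℕ → Fin b → V}

lemma ValidPR.label_eq (hκ : ∀ ⦃u v⦄, G.Adj u v → u ∉ F → v ∉ F → κ u = κ v)
    (hp : ValidPR G F p) (i : Fin b) : ∀ t, κ (p t i) = κ (p 0 i)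
  | 0 => rfl
  | t + 1 => by
    obtain ⟨w, hw⟩ := hp.2 t i
    rw [← hp.label_eq hκ i t]
    exact (label_eq_of_walk hκ w fun z hz hzF => hw z hz (subset_pburnt _ hzF)).symm

/-- A firefighter never leaves the component of `G - F` it starts in, so with `b` firefighters
and more than `b` components, one component is never defended and burns down completely. -/
theorem le_card_pburnt [DecidableEq ι] (hG : G.Connected) (hF : F.Nonempty)
    (hκ : ∀ ⦃u v⦄, G.Adj u v → u ∉ F → v ∉ F → κ u = κ v) {J : Finset ι} (hJ : b < #J)
    {m : ℕ} (hm : ∀ j ∈ J, m ≤ #{v | v ∉ F ∧ κ v = j}) (hp : ValidPR G F p) :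
    m ≤ #(pburnt G F p (Fintype.card V)) := by
  obtain ⟨j, hjJ, hj⟩ : ∃ j ∈ J, j ∉ univ.image fun i => κ (p 0 i) :=
    exists_mem_notMem_of_card_lt_card (card_image_le.trans_lt (by simpa using hJ))
  have hundefended : ∀ z, κ z = j → ∀ t, z ∉ posDef p t := by
    intro z hz t hzt
    obtain ⟨τ, -, i, rfl⟩ := mem_posDef.mp hzt
    exact hj (mem_image.mpr ⟨i, mem_univ _, (hp.label_eq hκ i τ).symm.trans hz⟩)
  refine (hm j hjJ).trans (card_le_card fun v hv => ?_)
  obtain ⟨-, rfl⟩ : v ∉ F ∧ κ v = j := by simpa using hv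
  obtain ⟨f, hf, w, hw⟩ := hG.exists_walk_from hκ hF v
  have hv := mem_pburnt_of_walk w.bypass (subset_pburnt 0 hf) fun z hz hzF =>
    hundefended z (hw z (w.support_bypass_subset_support hz) hzF)
  exact pburnt_mono (by simpa using w.bypass_isPath.length_lt.le) hv

end Components

section Expectation

variable {V : Type*} [Fintype V] [DecidableEq V] {G : SimpleGraph V} {q b : ℕ}

lemma card_sub_PRMVS_nonneg (F : Finset V) : (0 : ℚ) ≤ Fintype.card V - PRMVS G F b :=
  sub_nonneg.mpr (by exact_mod_cast PRMVS_le_card F b)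

lemma Epr_nonneg : 0 ≤ Epr G q b :=
  div_nonneg (sum_nonneg fun F _ => card_sub_PRMVS_nonneg F) (Nat.cast_nonneg _)

lemma Epr_le (c : ℕ) (h : ∀ F : Finset V, #F = q → Fintype.card V ≤ PRMVS G F b + c) :
    Epr G q b ≤ c := by
  refine div_le_of_le_mul₀ (Nat.cast_nonneg _) (Nat.cast_nonneg _) ?_
  calc ∑ F ∈ univ.powersetCard q, ((Fintype.card V : ℚ) - PRMVS G F b)
      ≤ ∑ F ∈ univ.powersetCard q, (c : ℚ) := sum_le_sum fun F hF => by
        rw [sub_le_iff_le_add']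
        exact_mod_cast h F (mem_powersetCard.mp hF).2
    _ = c * (Fintype.card V).choose q := by simp [card_powersetCard, mul_comm]

lemma le_Epr {𝒢 : Finset (Finset V)} (h𝒢 : 𝒢 ⊆ univ.powersetCard q) {m : ℕ}
    (hm : ∀ F ∈ 𝒢, PRMVS G F b + m ≤ Fintype.card V) :
    (m * #𝒢 : ℚ) / (Fintype.card V).choose q ≤ Epr G q b := by
  refine div_le_div_of_nonneg_right ?_ (Nat.cast_nonneg _)
  calc (m * #𝒢 : ℚ) = ∑ F ∈ 𝒢, (m : ℚ) := by simp [mul_comm]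
    _ ≤ ∑ F ∈ 𝒢, ((Fintype.card V : ℚ) - PRMVS G F b) := sum_le_sum fun F hF => by
        rw [le_sub_iff_add_le']
        exact_mod_cast hm F hF
    _ ≤ _ := sum_le_sum_of_subset_of_nonneg h𝒢 fun F _ _ => card_sub_PRMVS_nonneg F

end Expectation

section Cycle

open Fin.CommRing

variable {k : ℕ} {F : Finset (Fin (k + 2))}

lemma cycleGraph_adj_iff {u v : Fin (k + 2)} :
    (cycleGraph (k + 2)).Adj u v ↔ u = v - 1 ∨ u = v + 1 := by
  rw [adj_comm, ← mem_neighborSet, cycleGraph_neighborSet]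
  rfl

variable (F) in
/-- First vertices of the arcs, the maximal runs `s, s + 1, …` of vertices outside `F`. -/
def arcStarts : Finset (Fin (k + 2)) := {v | v ∉ F ∧ v - 1 ∈ F}

variable (F) in
/-- Last vertices of the arcs with at least two vertices. -/
def arcEnds : Finset (Fin (k + 2)) := {v | v ∉ F ∧ v - 1 ∉ F ∧ v + 1 ∈ F}

variable (F) in
/-- The number of steps from `s` to the next vertex of `F` (`0` if `F` is empty). -/
noncomputable def runLength (s : Fin (k + 2)) : ℕ := sInf {d : ℕ | s + d ∈ F}

variable (F) in
/-- The next-to-last vertex of the arc starting at `s`, or `s` itself for a one-vertex arc. -/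
noncomputable def arcTarget (s : Fin (k + 2)) : Fin (k + 2) := s + (runLength F s - 2 : ℕ)

@[simp]
lemma mem_arcStarts {v : Fin (k + 2)} : v ∈ arcStarts F ↔ v ∉ F ∧ v - 1 ∈ F := by
  simp [arcStarts]

@[simp]
lemma mem_arcEnds {v : Fin (k + 2)} : v ∈ arcEnds F ↔ v ∉ F ∧ v - 1 ∉ F ∧ v + 1 ∈ F := by
  simp [arcEnds]

lemma card_arcStarts_le : #(arcStarts F) ≤ #F :=
  card_le_card_of_injOn (· - 1) (fun _ hv => (mem_arcStarts.mp hv).2)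
    fun _ _ _ _ h => sub_left_injective h

lemma card_arcEnds_le : #(arcEnds F) ≤ #F :=
  card_le_card_of_injOn (· + 1) (fun _ hv => (mem_arcEnds.mp hv).2.2)
    fun _ _ _ _ h => add_left_injective 1 h

lemma add_runLength_mem (hF : F.Nonempty) (s : Fin (k + 2)) : s + (runLength F s : ℕ) ∈ F := by
  obtain ⟨f, hf⟩ := hF
  exact Nat.sInf_mem (s := {d : ℕ | s + d ∈ F}) ⟨(f - s).val, by simpa using hf⟩

lemma add_notMem_of_lt_runLength {s : Fin (k + 2)} {j : ℕ} (hj : j < runLength F s) :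
    s + (j : ℕ) ∉ F :=
  Nat.notMem_of_lt_sInf hj

lemma runLength_le {s : Fin (k + 2)} {j : ℕ} (hj : s + (j : ℕ) ∈ F) : runLength F s ≤ j :=
  Nat.sInf_le hj

lemma exists_arcStarts_add (hF : F.Nonempty) {v : Fin (k + 2)} (hv : v ∉ F) :
    ∃ s ∈ arcStarts F, ∃ j < runLength F s, v = s + (j : ℕ) := by
  set i := sInf {i : ℕ | v - ((i + 1 : ℕ) : Fin (k + 2)) ∈ F}
  have hi : v - ((i + 1 : ℕ) : Fin (k + 2)) ∈ F := by
    obtain ⟨f, hf⟩ := hF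
    refine Nat.sInf_mem (s := {i : ℕ | v - ((i + 1 : ℕ) : Fin (k + 2)) ∈ F})
      ⟨(v - f).val - 1, ?_⟩
    have : (v - f).val ≠ 0 := by
      rw [Fin.val_ne_zero_iff, sub_ne_zero]; exact fun h => hv (h ▸ hf)
    show v - (((v - f).val - 1 + 1 : ℕ) : Fin (k + 2)) ∈ F
    rwa [Nat.sub_add_cancel (Nat.one_le_iff_ne_zero.mpr this), Fin.cast_val_eq_self, sub_sub_cancel]
  have hvi : ∀ l ≤ i, v - (l : ℕ) ∉ F := by
    rintro (_ | l) hl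
    · simpa using hv
    · exact Nat.notMem_of_lt_sInf (s := {i : ℕ | v - ((i + 1 : ℕ) : Fin (k + 2)) ∈ F}) hl
  refine ⟨v - (i : ℕ), mem_arcStarts.mpr ⟨hvi i le_rfl, ?_⟩, i, ?_, by abel⟩
  · simpa [sub_sub] using hi
  · by_contra! h
    have hmem := add_runLength_mem hF (v - (i : ℕ))
    refine hvi (i - runLength F (v - (i : ℕ))) (Nat.sub_le _ _) ?_
    convert hmem using 1
    rw [Nat.cast_sub h]
    abel

lemma runLength_pos {s : Fin (k + 2)} (hF : F.Nonempty) (hs : s ∉ F) : 0 < runLength F s := by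
  refine Nat.pos_of_ne_zero fun h => hs ?_
  simpa [h] using add_runLength_mem hF s

lemma sub_one_mem_image_arcTarget (hF : F.Nonempty) {r : Fin (k + 2)} (hr : r ∈ arcEnds F) :
    r - 1 ∈ (arcStarts F).image (arcTarget F) := by
  obtain ⟨hrF, hr₁, hr₂⟩ := mem_arcEnds.mp hr
  obtain ⟨s, hs, j, hj, hsj⟩ := exists_arcStarts_add hF hr₁
  have hr : r = s + ((j + 1 : ℕ) : Fin (k + 2)) := by push_cast; linear_combination hsj
  have hr' : r + 1 = s + ((j + 2 : ℕ) : Fin (k + 2)) := by push_cast; linear_combination hsj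
  have hle : runLength F s ≤ j + 2 := runLength_le (hr' ▸ hr₂)
  have hne : runLength F s ≠ j + 1 := fun h => hrF (hr ▸ h ▸ add_runLength_mem hF s)
  refine mem_image.mpr ⟨s, hs, ?_⟩
  rw [arcTarget, hsj, show runLength F s - 2 = j by omega]

lemma spread_arcStarts_subset :
    spread (cycleGraph (k + 2)) (arcStarts F) F ⊆ F ∪ arcEnds F := by
  intro v hv
  simp only [mem_spread, mem_arcStarts, not_and] at hv
  rcases hv with hv | ⟨hvS, u, hu, huv⟩
  · exact mem_union_left _ hv
  by_cases hvF : v ∈ F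
  · exact mem_union_left _ hvF
  refine mem_union_right _ (mem_arcEnds.mpr ⟨hvF, hvS hvF, ?_⟩)
  rcases cycleGraph_adj_iff.mp huv with rfl | rfl
  · exact absurd hu (hvS hvF)
  · exact hu

lemma spread_union_arcEnds_subset (hF : F.Nonempty) {D : Finset (Fin (k + 2))}
    (hD : arcStarts F ∪ (arcStarts F).image (arcTarget F) ⊆ D) :
    spread (cycleGraph (k + 2)) D (F ∪ arcEnds F) ⊆ F ∪ arcEnds F := by
  intro v hv
  rcases mem_spread.mp hv with hv | ⟨hvD, u, hu, huv⟩
  · exact hv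
  by_contra hvB
  have hvF : v ∉ F := fun h => hvB (mem_union_left _ h)
  have hv₁ : v - 1 ∉ F := fun h => hvD (hD (mem_union_left _ (mem_arcStarts.mpr ⟨hvF, h⟩)))
  rcases cycleGraph_adj_iff.mp huv with rfl | rfl <;> rcases mem_union.mp hu with hu | hu
  · exact hv₁ hu
  · exact hvF (by simpa using (mem_arcEnds.mp hu).2.2)
  · exact hvB (mem_union_right _ (mem_arcEnds.mpr ⟨hvF, hv₁, hu⟩))
  · exact hvD (hD (mem_union_right _ (by simpa using sub_one_mem_image_arcTarget hF hu)))

lemma add_notMem_union_arcEnds (hF : F.Nonempty) {s : Fin (k + 2)} (hs : s ∈ arcStarts F) {j : ℕ}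
    (hj : j ≤ runLength F s - 2) : s + (j : ℕ) ∉ F ∪ arcEnds F := by
  obtain ⟨hsF, hs₁⟩ := mem_arcStarts.mp hs
  have hpos := runLength_pos hF hsF
  rw [mem_union, mem_arcEnds, not_or]
  refine ⟨add_notMem_of_lt_runLength (by omega), fun ⟨_, h₁, h₂⟩ => ?_⟩
  rcases j with _ | j
  · exact h₁ (by simpa using hs₁)
  · refine add_notMem_of_lt_runLength (F := F) (s := s) (j := j + 2) (by omega) ?_
    convert h₂ using 1
    push_cast
    ring

lemma exists_cycleGraph_walk (s : Fin (k + 2)) (j : ℕ) :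
    ∃ w : (cycleGraph (k + 2)).Walk s (s + (j : ℕ)), ∀ z ∈ w.support, ∃ i ≤ j, z = s + (i : ℕ) := by
  induction j with
  | zero => exact ⟨Walk.nil.copy rfl (by simp), fun z hz => ⟨0, le_rfl, by simpa using hz⟩⟩
  | succ j ih =>
    obtain ⟨w, hw⟩ := ih
    have hadj : (cycleGraph (k + 2)).Adj (s + (j : ℕ)) (s + ((j + 1 : ℕ) : Fin (k + 2))) :=
      cycleGraph_adj_iff.mpr (Or.inl (by push_cast; ring))
    refine ⟨w.concat hadj, fun z hz => ?_⟩
    rw [Walk.support_concat, List.mem_append, List.mem_singleton] at hz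
    rcases hz with hz | rfl
    · obtain ⟨i, hi, rfl⟩ := hw z hz
      exact ⟨i, by omega, rfl⟩
    · exact ⟨j + 1, le_rfl, rfl⟩

variable (F) in
noncomputable def arcStrategy {b : ℕ} (e : Fin b → Fin (k + 2)) : ℕ → Fin b → Fin (k + 2)
  | 0 => e
  | _ + 1 => arcTarget F ∘ e

variable {b : ℕ} {e : Fin b → Fin (k + 2)}

lemma pburnt_arcStrategy_subset (hF : F.Nonempty) (he : univ.image e = arcStarts F) (t : ℕ) :
    pburnt (cycleGraph (k + 2)) F (arcStrategy F e) t ⊆ F ∪ arcEnds F := by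
  have hstarts : ∀ t, arcStarts F ⊆ posDef (arcStrategy F e) t := fun t => by
    rw [← he]
    exact image_subset_posDef (p := arcStrategy F e) (Nat.zero_le t)
  refine pburnt_subset subset_union_left
    ((spread_mono (hstarts 0) subset_rfl).trans spread_arcStarts_subset) (fun t => ?_) t
  refine spread_union_arcEnds_subset hF (union_subset (hstarts _) ?_)
  rw [← he, image_image]
  exact image_subset_posDef (p := arcStrategy F e) (τ := t + 1) le_rfl

lemma validPR_arcStrategy (hF : F.Nonempty) (he : univ.image e = arcStarts F) :
    ValidPR (cycleGraph (k + 2)) F (arcStrategy F e) := by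
  have hB := pburnt_arcStrategy_subset hF he
  have hstart : ∀ i, e i ∈ arcStarts F := fun i => he ▸ mem_image_of_mem e (mem_univ i)
  have hsafe₀ : ∀ i, e i ∉ F ∪ arcEnds F := fun i => by
    simpa using add_notMem_union_arcEnds hF (hstart i) (Nat.zero_le _)
  have hsafe : ∀ i, arcTarget F (e i) ∉ F ∪ arcEnds F := fun i =>
    add_notMem_union_arcEnds hF (hstart i) le_rfl
  refine ⟨fun t i h => ?_, fun t i => ?_⟩
  · rcases t with _ | t
    · exact hsafe₀ i (hB 0 h)
    · exact hsafe i (hB _ h)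
  · rcases t with _ | t
    · obtain ⟨w, hw⟩ := exists_cycleGraph_walk (e i) (runLength F (e i) - 2)
      refine ⟨w, fun z hz h => ?_⟩
      obtain ⟨j, hj, rfl⟩ := hw z hz
      exact add_notMem_union_arcEnds hF (hstart i) hj (hB 1 h)
    · refine ⟨Walk.nil, fun z hz h => ?_⟩
      exact hsafe i (hB _ (List.mem_singleton.mp hz ▸ h))

lemma card_pburnt_arcStrategy_le (hF : F.Nonempty) (he : univ.image e = arcStarts F) (t : ℕ) :
    #(pburnt (cycleGraph (k + 2)) F (arcStrategy F e) t) ≤ 2 * #F :=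
  calc _ ≤ #(F ∪ arcEnds F) := card_le_card (pburnt_arcStrategy_subset hF he t)
    _ ≤ #F + #(arcEnds F) := card_union_le _ _
    _ ≤ 2 * #F := by have := card_arcEnds_le (F := F); omega

lemma Epr_cycleGraph_le {n b : ℕ} (hb : 1 ≤ b) (hbn : b < n) :
    Epr (cycleGraph n) b b ≤ (2 * b : ℕ) := by
  obtain ⟨k, rfl⟩ : ∃ k, n = k + 2 := ⟨n - 2, by omega⟩
  refine Epr_le _ fun F hF => ?_
  have hFne : F.Nonempty := card_pos.mp (by omega)
  obtain ⟨v, -, hv⟩ := exists_mem_notMem_of_card_lt_card (s := F) (t := univ) (by simpa [hF])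
  obtain ⟨s, hs, -⟩ := exists_arcStarts_add hFne hv
  obtain ⟨e, he⟩ := exists_image_univ_eq ⟨s, hs⟩ (card_arcStarts_le.trans hF.le)
  have hsaved := card_le_PRMVS_add (validPR_arcStrategy hFne he)
  have hburnt := card_pburnt_arcStrategy_le hFne he (Fintype.card (Fin (k + 2)))
  omega

end Cycle

section Path

lemma pathGraph_connected_of_pos {n : ℕ} (hn : 0 < n) : (pathGraph n).Connected := by
  obtain ⟨k, rfl⟩ : ∃ k, n = k + 1 := ⟨n - 1, by omega⟩
  exact pathGraph_connected k

lemma card_filter_lt_eq_of_pathGraph_adj {n : ℕ} {F : Finset (Fin n)} {u v : Fin n}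
    (huv : (pathGraph n).Adj u v) (hu : u ∉ F) (hv : v ∉ F) :
    #{f ∈ F | f < u} = #{f ∈ F | f < v} := by
  refine congrArg card (filter_congr fun f hf => ?_)
  have hfu := ne_of_mem_of_not_mem hf hu
  have hfv := ne_of_mem_of_not_mem hf hv
  rw [pathGraph_adj] at huv
  simp only [Fin.lt_def, ne_eq, Fin.ext_iff] at hfu hfv ⊢
  omega

variable {n' b m : ℕ} {e : Fin b → Fin n'}

def spreadOut (m : ℕ) (e : Fin b → Fin n') : Fin b → Fin (n' + (b + 1) * (m + 1)) :=
  fun i => ⟨e i + (m + 1) * (i + 1), by nlinarith [(e i).2, i.2]⟩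

variable (m e) in
/-- The first vertex of the `j`-th gap of `spreadOut m e`, i.e. of the gap just below its `j`-th
point, or above its last point for `j = b`. -/
def gapStart (j : ℕ) : ℕ := (if h : j < b then (e ⟨j, h⟩ : ℕ) else n') + (m + 1) * j

lemma spreadOut_strictMono (he : StrictMono e) : StrictMono (spreadOut m e) := fun i j hij =>
  Nat.add_lt_add_of_lt_of_le (he hij) (Nat.mul_le_mul_left _ (by omega))

lemma spreadOut_injective : Function.Injective (spreadOut (b := b) (n' := n') m) :=
  fun _ _ h => funext fun i => Fin.ext (by simpa [spreadOut] using congrArg Fin.val (congrFun h i))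

lemma gapStart_add_lt (j : ℕ) (hj : j ≤ b) {k : ℕ} (hk : k < m) :
    gapStart m e j + k < n' + (b + 1) * (m + 1) := by
  unfold gapStart
  split_ifs with h
  · nlinarith [(e ⟨j, h⟩).2]
  · nlinarith

lemma spreadOut_lt_gapStart_add (he : StrictMono e) {i : Fin b} {j : ℕ} (hij : i < j) (k : ℕ) :
    (spreadOut m e i : ℕ) < gapStart m e j + k := by
  have hmul : (m + 1) * (i + 1) ≤ (m + 1) * j := Nat.mul_le_mul_left _ hij
  have hlt : (e i : ℕ) < if h : j < b then (e ⟨j, h⟩ : ℕ) else n' := by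
    split_ifs with h
    · exact he (Fin.mk_lt_mk.mpr hij)
    · exact (e i).2
  simp only [spreadOut, gapStart]
  omega

lemma gapStart_add_lt_spreadOut (he : StrictMono e) {i : Fin b} {j : ℕ} (hij : j ≤ i) {k : ℕ}
    (hk : k < m) : gapStart m e j + k < spreadOut m e i := by
  have hj : j < b := hij.trans_lt i.2
  have hmul : (m + 1) * (j + 1) ≤ (m + 1) * (i + 1) := Nat.mul_le_mul_left _ (by omega)
  have hle : (e ⟨j, hj⟩ : ℕ) ≤ e i := he.monotone (Fin.mk_le_mk.mpr hij)
  simp only [spreadOut, gapStart, dif_pos hj]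
  nlinarith

/-- The `j`-th gap consists of the free vertices with exactly `j` points below them. -/
lemma le_card_gap (he : StrictMono e) {j : ℕ} (hj : j ≤ b) :
    m ≤ #{v | v ∉ univ.image (spreadOut m e) ∧ #{f ∈ univ.image (spreadOut m e) | f < v} = j} := by
  let point : Fin m → Fin (n' + (b + 1) * (m + 1)) := fun k =>
    ⟨gapStart m e j + k, gapStart_add_lt j hj k.2⟩
  have hpoint : Function.Injective point := fun k₁ k₂ h => by
    simpa [point, Fin.ext_iff] using h
  have hlt_iff : ∀ (k : Fin m) (i : Fin b), spreadOut m e i < point k ↔ (i : ℕ) < j := by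
    intro k i
    refine ⟨fun h => ?_, fun h => spreadOut_lt_gapStart_add he h k⟩
    by_contra! hij
    exact (gapStart_add_lt_spreadOut he hij k.2).not_gt h
  have hne : ∀ (k : Fin m) (i : Fin b), spreadOut m e i ≠ point k := by
    intro k i hi
    rcases lt_or_ge (i : ℕ) j with h | h
    · exact (spreadOut_lt_gapStart_add he h k).ne (congrArg Fin.val hi)
    · exact (gapStart_add_lt_spreadOut he h k.2).ne' (congrArg Fin.val hi)
  calc m = #(univ.image point) := by
        rw [card_image_of_injective _ hpoint, card_univ, Fintype.card_fin]
    _ ≤ _ := by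
      refine card_le_card (image_subset_iff.mpr fun k _ => ?_)
      simp only [mem_filter, mem_univ, true_and, mem_image, not_exists]
      refine ⟨hne k, ?_⟩
      rw [filter_image, card_image_of_injective _ (spreadOut_strictMono he).injective,
        filter_congr fun i _ => hlt_iff k i, Fin.card_filter_val_lt, min_eq_right hj]

noncomputable def spreadSets (b m n' : ℕ) : Finset (Finset (Fin (n' + (b + 1) * (m + 1)))) :=
  (univ.powersetCard b).attach.image fun F =>
    univ.image (spreadOut m (F.1.orderEmbOfFin (mem_powersetCard.mp F.2).2))

lemma card_spreadSets : #(spreadSets b m n') = n'.choose b := by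
  rw [spreadSets, card_image_of_injective, card_attach, card_powersetCard, card_univ,
    Fintype.card_fin]
  intro F₁ F₂ h
  have h' := congrArg (fun s : Finset (Fin (n' + (b + 1) * (m + 1))) =>
    (s : _root_.Set (Fin (n' + (b + 1) * (m + 1))))) h
  simp only [coe_image, coe_univ, Set.image_univ] at h'
  have := spreadOut_injective <|
    ((spreadOut_strictMono (OrderEmbedding.strictMono _)).range_inj
      (spreadOut_strictMono (OrderEmbedding.strictMono _))).mp h'
  rw [Subtype.ext_iff, ← image_orderEmbOfFin_univ F₁.1 (mem_powersetCard.mp F₁.2).2,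
    ← image_orderEmbOfFin_univ F₂.1 (mem_powersetCard.mp F₂.2).2]
  exact congrArg (univ.image ·) this

lemma le_Epr_pathGraph (hb : 1 ≤ b) (m n' : ℕ) :
    (m * n'.choose b : ℚ) / (n' + (b + 1) * (m + 1)).choose b ≤
      Epr (pathGraph (n' + (b + 1) * (m + 1))) b b := by
  have hmem : ∀ F ∈ spreadSets b m n', ∃ e : Fin b → Fin n', StrictMono e ∧
      univ.image (spreadOut m e) = F := by
    intro F hF
    obtain ⟨F', -, rfl⟩ := mem_image.mp hF
    exact ⟨_, OrderEmbedding.strictMono _, rfl⟩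
  have hcard : ∀ F ∈ spreadSets b m n', #F = b := by
    intro F hF
    obtain ⟨e, he, rfl⟩ := hmem F hF
    rw [card_image_of_injective _ (spreadOut_strictMono he).injective, card_univ, Fintype.card_fin]
  have hgood : ∀ F ∈ spreadSets b m n', PRMVS (pathGraph (n' + (b + 1) * (m + 1))) F b + m ≤
      Fintype.card (Fin (n' + (b + 1) * (m + 1))) := by
    intro F hF
    obtain ⟨e, he, rfl⟩ := hmem F hF
    refine PRMVS_add_le (by simp; nlinarith) fun p hp => ?_
    refine le_card_pburnt (pathGraph_connected_of_pos (by positivity)) ?_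
      (fun u v huv hu hv => card_filter_lt_eq_of_pathGraph_adj huv hu hv) (J := range (b + 1))
      (by simp) (fun j hj => le_card_gap he (Nat.lt_succ_iff.mp (mem_range.mp hj))) hp
    exact card_pos.mp ((hcard _ hF).symm ▸ hb)
  have := le_Epr (fun F hF => mem_powersetCard.mpr ⟨subset_univ F, hcard F hF⟩) hgood
  rwa [Fintype.card_fin, card_spreadSets] at this

lemma exists_le_Epr_pathGraph {b : ℕ} (hb : 1 ≤ b) (A : ℕ) :
    ∃ n, b < n ∧ (A : ℚ) ≤ Epr (pathGraph n) b b := by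
  set m := A * 2 ^ b
  set n' := (b + 1) * (m + 1) + 2 * b
  have hchoose : (n' + (b + 1) * (m + 1)).choose b ≤ 2 ^ b * n'.choose b :=
    Nat.choose_le_two_pow_mul_choose (by omega)
  refine ⟨n' + (b + 1) * (m + 1), by nlinarith, le_trans ?_ (le_Epr_pathGraph hb m n')⟩
  rw [le_div_iff₀ (by exact_mod_cast Nat.choose_pos (by nlinarith))]
  exact_mod_cast (Nat.mul_le_mul_left A hchoose).trans_eq (by ring)

end Path

end FF

open FF

theorem stmt13 (b : ℕ) (hb : 1 ≤ b) (K : ℚ) :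
    ∃ (n : ℕ) (G H : SimpleGraph (Fin n)),
      H ≤ G ∧ G.Connected ∧ H.Connected ∧
      FF.Epr G b b < FF.Epr H b b ∧ K * FF.Epr G b b < FF.Epr H b b := by
  obtain ⟨A, hA⟩ := exists_nat_gt (2 * b * (|K| + 1))
  obtain ⟨n, hbn, hH⟩ := exists_le_Epr_pathGraph hb A
  have hG : Epr (cycleGraph n) b b ≤ (2 * b : ℕ) := Epr_cycleGraph_le hb hbn
  have hG₀ : 0 ≤ Epr (cycleGraph n) b b := Epr_nonneg
  have hconn := pathGraph_connected_of_pos (n := n) (by omega)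
  refine ⟨n, cycleGraph n, pathGraph n, pathGraph_le_cycleGraph,
    hconn.mono pathGraph_le_cycleGraph, hconn, ?_, ?_⟩
  · push_cast at hG
    nlinarith [abs_nonneg K]
  · calc K * Epr (cycleGraph n) b b ≤ |K| * Epr (cycleGraph n) b b :=
          mul_le_mul_of_nonneg_right (le_abs_self K) hG₀
      _ ≤ |K| * (2 * b) := mul_le_mul_of_nonneg_left (by exact_mod_cast hG) (abs_nonneg K)
      _ < A := by nlinarith [abs_nonneg K]
      _ ≤ _ := hH
end
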